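/- arXiv:1904.12270 — 2 statements merged into one kernel-verified Lean document; each statement's English description precedes it below -/
import Mathlib

section
/- Let Σ, Σ' be disjoint solids of PG(7,q), S = {ℓ_i} a line-spread of Σ, S' = {ℓ'_i} a line-spread of Σ', with a bijection ℓ'_i ↦ ℓ_i. Let Y be the set of all solids T ≠ Σ such that for some i, T ⊆ ⟨Σ, ℓ'_i⟩ and T ∩ Σ is a plane containing ℓ_i. Then |Y| = q(q+1)^2(q^2+1), and every line of PG(7,q) meeting Σ in at least one point is contained in at least one solid of Y ∪ {Σ}. -/
open Module Submodule

private lemma aux_sup_span1 {F V : Type*} [Field F] [AddCommGroup V] [Module F V]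
    [FiniteDimensional F V] {A : Submodule F V} {v : V} (hv : v ∉ A) :
    Module.finrank F ↥(A ⊔ span F {v}) = Module.finrank F A + 1 := by
  have hv0 : v ≠ 0 := fun h => hv (h ▸ A.zero_mem)
  have hinf : A ⊓ span F {v} = ⊥ := by
    rw [eq_bot_iff]
    intro x hx
    rw [Submodule.mem_inf, Submodule.mem_span_singleton] at hx
    obtain ⟨hxA, c, rfl⟩ := hx
    rcases eq_or_ne c 0 with rfl | hc
    · simp
    · exfalso
      apply hv
      have := A.smul_mem c⁻¹ hxA
      rwa [smul_smul, inv_mul_cancel₀ hc, one_smul] at this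
  have h := Submodule.finrank_sup_add_finrank_inf_eq A (span F {v})
  rw [hinf, finrank_bot, finrank_span_singleton hv0] at h
  omega

private lemma aux_card1 {F V : Type*} [Field F] [Fintype F] [AddCommGroup V] [Module F V]
    [Fintype V] {A B : Submodule F V} (hBA : B ≤ A) :
    Nat.card {v : V // v ∈ A ∧ v ∉ B} =
      Fintype.card F ^ Module.finrank F A - Fintype.card F ^ Module.finrank F B := by
  classical
  have hA : Nat.card ↥A = Fintype.card F ^ Module.finrank F A := by
    rw [Nat.card_eq_fintype_card]; exact card_eq_pow_finrank (K := F)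
  have hB : Nat.card ↥B = Fintype.card F ^ Module.finrank F B := by
    rw [Nat.card_eq_fintype_card]; exact card_eq_pow_finrank (K := F)
  have e : {v : V // v ∈ A ∧ v ∉ B} ≃ ↥((A : Set V) \ (B : Set V)) :=
    Equiv.subtypeEquivRight (by intro x; simp [Set.mem_diff])
  rw [Nat.card_congr e, Nat.card_coe_set_eq,
    Set.ncard_diff (by exact_mod_cast hBA : (B : Set V) ⊆ (A : Set V))]
  have hA' : (A : Set V).ncard = Nat.card ↥A := (Nat.card_coe_set_eq _).symm
  have hB' : (B : Set V).ncard = Nat.card ↥B := (Nat.card_coe_set_eq _).symm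
  rw [hA', hB', hA, hB]

private lemma aux_sigma1 {A : Type*} (B : A → Type*) [Finite A] [∀ a, Finite (B a)] {c : ℕ}
    (h : ∀ a, Nat.card (B a) = c) : Nat.card ((a : A) × B a) = Nat.card A * c := by
  classical
  cases nonempty_fintype A
  have : ∀ a, Fintype (B a) := fun a => Fintype.ofFinite _
  rw [Nat.card_eq_fintype_card, Fintype.card_sigma, Nat.card_eq_fintype_card]
  have hc : ∀ a, Fintype.card (B a) = c := fun a => by rw [← Nat.card_eq_fintype_card]; exact h a
  simp [hc, mul_comm]

set_option maxHeartbeats 1000000 in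
theorem stmt12c (q : ℕ) (F : Type) [Field F] [Fintype F] (hq : Fintype.card F = q)
    (Sg Sg' : Submodule F (Fin 8 → F))
    (hSg : Module.finrank F Sg = 4) (hSg' : Module.finrank F Sg' = 4)
    (hdisj : Sg ⊓ Sg' = ⊥)
    (ι : Type) (ℓ ℓ' : ι → Submodule F (Fin 8 → F))
    (hℓdim : ∀ i, Module.finrank F (ℓ i) = 2) (hℓle : ∀ i, ℓ i ≤ Sg)
    (hspread : ∀ v : Fin 8 → F, v ∈ Sg → v ≠ 0 → ∃! i, v ∈ ℓ i)
    (hℓ'dim : ∀ i, Module.finrank F (ℓ' i) = 2) (hℓ'le : ∀ i, ℓ' i ≤ Sg')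
    (hspread' : ∀ v : Fin 8 → F, v ∈ Sg' → v ≠ 0 → ∃! i, v ∈ ℓ' i) :
    Nat.card {T : Submodule F (Fin 8 → F) //
        T ≠ Sg ∧ Module.finrank F T = 4 ∧
        ∃ i, T ≤ Sg ⊔ ℓ' i ∧ Module.finrank F ↥(T ⊓ Sg) = 3 ∧ ℓ i ≤ T ⊓ Sg} =
      q * (q + 1) ^ 2 * (q ^ 2 + 1) := by
  classical
  have hq2 : 2 ≤ q := hq ▸ Fintype.one_lt_card
  -- spread lines are pairwise disjoint
  have hdisjℓ : ∀ i j, i ≠ j → ℓ i ⊓ ℓ j = ⊥ := by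
    intro i j hij
    by_contra h
    obtain ⟨x, hx, h0⟩ := Submodule.exists_mem_ne_zero_of_ne_bot h
    rw [Submodule.mem_inf] at hx
    exact hij ((hspread x (hℓle i hx.1) h0).unique hx.1 hx.2)
  -- the spread index of a solid in Y is unique
  have hind : ∀ T : Submodule F (Fin 8 → F), Module.finrank F ↥(T ⊓ Sg) = 3 →
      ∀ i j, ℓ i ≤ T ⊓ Sg → ℓ j ≤ T ⊓ Sg → i = j := by
    intro T h3 i j hi hj
    by_contra hij
    have h := Submodule.finrank_sup_add_finrank_inf_eq (ℓ i) (ℓ j)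
    rw [hdisjℓ i j hij, finrank_bot, hℓdim i, hℓdim j] at h
    have h2 : Module.finrank F ↥(ℓ i ⊔ ℓ j) ≤ 3 := h3 ▸ Submodule.finrank_mono (sup_le hi hj)
    omega
  have hSgℓ' : ∀ i, Sg ⊓ ℓ' i = ⊥ := fun i => by
    rw [eq_bot_iff, ← hdisj]; exact inf_le_inf_left Sg (hℓ'le i)
  have hΓ : ∀ i, Module.finrank F ↥(Sg ⊔ ℓ' i) = 6 := by
    intro i
    have h := Submodule.finrank_sup_add_finrank_inf_eq Sg (ℓ' i)
    rw [hSgℓ' i, finrank_bot, hSg, hℓ'dim i] at h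
    omega
  -- forward construction
  have hfwd : ∀ (i : ι) (u v : Fin 8 → F), u ∈ Sg → u ∉ ℓ i → v ∈ Sg ⊔ ℓ' i → v ∉ Sg →
      ((ℓ i ⊔ span F {u}) ⊔ span F {v}) ≠ Sg ∧
      Module.finrank F ↥((ℓ i ⊔ span F {u}) ⊔ span F {v}) = 4 ∧
      ((ℓ i ⊔ span F {u}) ⊔ span F {v}) ≤ Sg ⊔ ℓ' i ∧
      ((ℓ i ⊔ span F {u}) ⊔ span F {v}) ⊓ Sg = ℓ i ⊔ span F {u} ∧
      Module.finrank F ↥(((ℓ i ⊔ span F {u}) ⊔ span F {v}) ⊓ Sg) = 3 ∧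
      ℓ i ≤ ((ℓ i ⊔ span F {u}) ⊔ span F {v}) ⊓ Sg := by
    intro i u v hu huℓ hv hvS
    have hASg : ℓ i ⊔ span F {u} ≤ Sg :=
      sup_le (hℓle i) ((span_singleton_le_iff_mem _ _).mpr hu)
    have hA3 : Module.finrank F ↥(ℓ i ⊔ span F {u}) = 3 := by
      rw [aux_sup_span1 huℓ, hℓdim i]
    have hvA : v ∉ ℓ i ⊔ span F {u} := fun h => hvS (hASg h)
    have hT4 : Module.finrank F ↥((ℓ i ⊔ span F {u}) ⊔ span F {v}) = 4 := by
      rw [aux_sup_span1 hvA, hA3]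
    have hvT : v ∈ (ℓ i ⊔ span F {u}) ⊔ span F {v} :=
      Submodule.mem_sup_right (mem_span_singleton_self v)
    have hTne : ((ℓ i ⊔ span F {u}) ⊔ span F {v}) ≠ Sg := fun h => hvS (h ▸ hvT)
    have hAle : ℓ i ⊔ span F {u} ≤ ((ℓ i ⊔ span F {u}) ⊔ span F {v}) ⊓ Sg :=
      le_inf le_sup_left hASg
    have hlt : ((ℓ i ⊔ span F {u}) ⊔ span F {v}) ⊓ Sg < (ℓ i ⊔ span F {u}) ⊔ span F {v} := by
      refine lt_of_le_of_ne inf_le_left fun h => ?_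
      have hle : (ℓ i ⊔ span F {u}) ⊔ span F {v} ≤ Sg := by rw [← h]; exact inf_le_right
      exact hvS (hle hvT)
    have h1 := Submodule.finrank_lt_finrank_of_lt hlt
    have h2 := Submodule.finrank_mono hAle
    rw [hT4] at h1
    rw [hA3] at h2
    have h3 : Module.finrank F ↥(((ℓ i ⊔ span F {u}) ⊔ span F {v}) ⊓ Sg) = 3 := by omega
    have hAeq : ((ℓ i ⊔ span F {u}) ⊔ span F {v}) ⊓ Sg = ℓ i ⊔ span F {u} :=
      (Submodule.eq_of_le_of_finrank_eq hAle (by rw [hA3, h3])).symm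
    exact ⟨hTne, hT4,
      sup_le (hASg.trans le_sup_left) ((span_singleton_le_iff_mem _ _).mpr hv),
      hAeq, h3, le_sup_left.trans hAle⟩
  -- reconstruction
  have hrec : ∀ (T : Submodule F (Fin 8 → F)) (i : ι) (u v : Fin 8 → F),
      Module.finrank F T = 4 → Module.finrank F ↥(T ⊓ Sg) = 3 → ℓ i ≤ T ⊓ Sg →
      u ∈ T ⊓ Sg → u ∉ ℓ i → v ∈ T → v ∉ T ⊓ Sg →
      (ℓ i ⊔ span F {u}) ⊔ span F {v} = T := by
    intro T i u v hT4 h3 hi hu huℓ hv hvI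
    have hAle : ℓ i ⊔ span F {u} ≤ T ⊓ Sg :=
      sup_le hi ((span_singleton_le_iff_mem _ _).mpr hu)
    have hAeq : ℓ i ⊔ span F {u} = T ⊓ Sg :=
      Submodule.eq_of_le_of_finrank_eq hAle (by rw [aux_sup_span1 huℓ, hℓdim i, h3])
    have hvA : v ∉ ℓ i ⊔ span F {u} := by rw [hAeq]; exact hvI
    refine Submodule.eq_of_le_of_finrank_eq
      (sup_le (hAle.trans inf_le_left) ((span_singleton_le_iff_mem _ _).mpr hv)) ?_
    rw [aux_sup_span1 hvA, aux_sup_span1 huℓ, hℓdim i, hT4]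
  -- the types
  let NZ' : Type := {w : Fin 8 → F // w ∈ Sg' ∧ w ∉ (⊥ : Submodule F (Fin 8 → F))}
  let J : NZ' → ι := fun w => (hspread' w.1 w.2.1 (by simpa using w.2.2)).choose
  have hJ : ∀ w : NZ', w.1 ∈ ℓ' (J w) := fun w =>
    (hspread' w.1 w.2.1 (by simpa using w.2.2)).choose_spec.1
  have hJu : ∀ (w : NZ') (i : ι), w.1 ∈ ℓ' i → i = J w := fun w i h =>
    (hspread' w.1 w.2.1 (by simpa using w.2.2)).choose_spec.2 i h
  let YT : Type := {T : Submodule F (Fin 8 → F) //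
      T ≠ Sg ∧ Module.finrank F T = 4 ∧
      ∃ i, T ≤ Sg ⊔ ℓ' i ∧ Module.finrank F ↥(T ⊓ Sg) = 3 ∧ ℓ i ≤ T ⊓ Sg}
  let I : YT → ι := fun T => T.2.2.2.choose
  have hI : ∀ T : YT, T.1 ≤ Sg ⊔ ℓ' (I T) ∧ Module.finrank F ↥(T.1 ⊓ Sg) = 3 ∧
      ℓ (I T) ≤ T.1 ⊓ Sg := fun T => T.2.2.2.choose_spec
  have hIu : ∀ (T : YT) (i : ι), ℓ i ≤ T.1 ⊓ Sg → i = I T := fun T i h =>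
    hind T.1 (hI T).2.1 i (I T) h (hI T).2.2
  let D : Type := (w : NZ') × ({u : Fin 8 → F // u ∈ Sg ∧ u ∉ ℓ (J w)} ×
      {v : Fin 8 → F // v ∈ Sg ⊔ ℓ' (J w) ∧ v ∉ Sg})
  let E : Type := (T : YT) ×
      ({w : Fin 8 → F // w ∈ ℓ' (I T) ∧ w ∉ (⊥ : Submodule F (Fin 8 → F))} ×
       {u : Fin 8 → F // u ∈ T.1 ⊓ Sg ∧ u ∉ ℓ (I T)} ×
       {v : Fin 8 → F // v ∈ T.1 ∧ v ∉ T.1 ⊓ Sg})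
  -- the maps
  let f : D → E := fun x => by
    have h := hfwd (J x.1) x.2.1.1 x.2.2.1 x.2.1.2.1 x.2.1.2.2 x.2.2.2.1 x.2.2.2.2
    have hIT : J x.1 = I ⟨(ℓ (J x.1) ⊔ span F {x.2.1.1}) ⊔ span F {x.2.2.1},
        h.1, h.2.1, J x.1, h.2.2.1, h.2.2.2.2.1, h.2.2.2.2.2⟩ :=
      hIu _ _ h.2.2.2.2.2
    refine ⟨⟨(ℓ (J x.1) ⊔ span F {x.2.1.1}) ⊔ span F {x.2.2.1},
      h.1, h.2.1, J x.1, h.2.2.1, h.2.2.2.2.1, h.2.2.2.2.2⟩,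
      ⟨x.1.1, ?_, x.1.2.2⟩, ⟨x.2.1.1, ?_, ?_⟩, ⟨x.2.2.1, ?_, ?_⟩⟩
    · rw [← hIT]
      exact hJ x.1
    · rw [h.2.2.2.1]
      exact Submodule.mem_sup_right (mem_span_singleton_self _)
    · rw [← hIT]
      exact x.2.1.2.2
    · exact Submodule.mem_sup_right (mem_span_singleton_self _)
    · exact fun hm => x.2.2.2.2 (Submodule.mem_inf.mp hm).2
  let g : E → D := fun y =>
    ⟨⟨y.2.1.1, hℓ'le (I y.1) y.2.1.2.1, y.2.1.2.2⟩,
     ⟨y.2.2.1.1, y.2.2.1.2.1.2, by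
        rw [← hJu ⟨y.2.1.1, hℓ'le (I y.1) y.2.1.2.1, y.2.1.2.2⟩ (I y.1) y.2.1.2.1]
        exact y.2.2.1.2.2⟩,
     ⟨y.2.2.2.1, by
        rw [← hJu ⟨y.2.1.1, hℓ'le (I y.1) y.2.1.2.1, y.2.1.2.2⟩ (I y.1) y.2.1.2.1]
        exact (hI y.1).1 y.2.2.2.2.1,
      fun h => y.2.2.2.2.2 (Submodule.mem_inf.mpr ⟨y.2.2.2.2.1, h⟩)⟩⟩
  have hgf : Function.LeftInverse g f := by
    intro x
    rfl
  have hfg : Function.RightInverse g f := by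
    intro y
    obtain ⟨⟨T, hT⟩, ⟨w, hw⟩, ⟨u, hu⟩, ⟨v, hv⟩⟩ := y
    have hwSg' : w ∈ Sg' := hℓ'le _ hw.1
    have hw2 : w ∉ (⊥ : Submodule F (Fin 8 → F)) := hw.2
    have hJw : I (⟨T, hT⟩ : YT) = J ⟨w, hwSg', hw2⟩ := hJu _ _ hw.1
    have hTeq : T = (ℓ (J ⟨w, hwSg', hw2⟩) ⊔ span F {u}) ⊔ span F {v} := by
      rw [← hJw]
      exact (hrec T (I ⟨T, hT⟩) u v hT.2.1 (hI ⟨T, hT⟩).2.1 (hI ⟨T, hT⟩).2.2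
        hu.1 hu.2 hv.1 hv.2).symm
    subst hTeq
    rfl
  -- cardinalities
  have hfibD : ∀ w : NZ', Nat.card ({u : Fin 8 → F // u ∈ Sg ∧ u ∉ ℓ (J w)} ×
      {v : Fin 8 → F // v ∈ Sg ⊔ ℓ' (J w) ∧ v ∉ Sg}) = (q ^ 4 - q ^ 2) * (q ^ 6 - q ^ 4) := by
    intro w
    rw [Nat.card_prod]
    have h1 := aux_card1 (hℓle (J w))
    rw [hSg, hℓdim, hq] at h1
    have h2 := aux_card1 (le_sup_left : Sg ≤ Sg ⊔ ℓ' (J w))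
    rw [hSg, hΓ, hq] at h2
    rw [h1, h2]
  have hcD : Nat.card D = (q ^ 4 - 1) * ((q ^ 4 - q ^ 2) * (q ^ 6 - q ^ 4)) := by
    rw [aux_sigma1 _ hfibD]
    have h0 := aux_card1 (bot_le : ⊥ ≤ Sg')
    rw [hSg', finrank_bot, hq, pow_zero] at h0
    rw [show Nat.card NZ' = Nat.card {w : Fin 8 → F // w ∈ Sg' ∧ w ∉ (⊥ : Submodule F (Fin 8 → F))} from rfl, h0]
  have hfibE : ∀ T : YT, Nat.card
      ({w : Fin 8 → F // w ∈ ℓ' (I T) ∧ w ∉ (⊥ : Submodule F (Fin 8 → F))} ×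
       ({u : Fin 8 → F // u ∈ T.1 ⊓ Sg ∧ u ∉ ℓ (I T)} ×
        {v : Fin 8 → F // v ∈ T.1 ∧ v ∉ T.1 ⊓ Sg})) =
      (q ^ 2 - 1) * ((q ^ 3 - q ^ 2) * (q ^ 4 - q ^ 3)) := by
    intro T
    rw [Nat.card_prod, Nat.card_prod]
    have h1 := aux_card1 (bot_le : ⊥ ≤ ℓ' (I T))
    rw [hℓ'dim, finrank_bot, hq, pow_zero] at h1
    have h2 := aux_card1 ((hI T).2.2)
    rw [(hI T).2.1, hℓdim, hq] at h2
    have h3 := aux_card1 (inf_le_left : T.1 ⊓ Sg ≤ T.1)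
    rw [T.2.2.1, (hI T).2.1, hq] at h3
    rw [h1, h2, h3]
  haveI : Finite (Submodule F (Fin 8 → F)) :=
    Finite.of_injective (fun A => (A : Set (Fin 8 → F))) SetLike.coe_injective
  haveI : Finite YT := inferInstanceAs (Finite {T : Submodule F (Fin 8 → F) //
      T ≠ Sg ∧ Module.finrank F T = 4 ∧
      ∃ i, T ≤ Sg ⊔ ℓ' i ∧ Module.finrank F ↥(T ⊓ Sg) = 3 ∧ ℓ i ≤ T ⊓ Sg})
  have hcE : Nat.card E = Nat.card YT * ((q ^ 2 - 1) * ((q ^ 3 - q ^ 2) * (q ^ 4 - q ^ 3))) :=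
    aux_sigma1 _ hfibE
  have heqDE : Nat.card D = Nat.card E := Nat.card_congr ⟨f, g, hgf, hfg⟩
  have hYT : Nat.card YT * ((q ^ 2 - 1) * ((q ^ 3 - q ^ 2) * (q ^ 4 - q ^ 3))) =
      (q ^ 4 - 1) * ((q ^ 4 - q ^ 2) * (q ^ 6 - q ^ 4)) := by
    rw [← hcE, ← heqDE, hcD]
  have hq1 : 1 < q := hq2
  have e1 : 1 < q ^ 2 := Nat.one_lt_pow (by omega) hq1
  have e2 : q ^ 2 < q ^ 3 := Nat.pow_lt_pow_right hq1 (by omega)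
  have e3 : q ^ 3 < q ^ 4 := Nat.pow_lt_pow_right hq1 (by omega)
  have e4 : 1 < q ^ 4 := Nat.one_lt_pow (by omega) hq1
  have e5 : q ^ 2 < q ^ 4 := Nat.pow_lt_pow_right hq1 (by omega)
  have e6 : q ^ 4 < q ^ 6 := Nat.pow_lt_pow_right hq1 (by omega)
  have hCpos : 0 < (q ^ 2 - 1) * ((q ^ 3 - q ^ 2) * (q ^ 4 - q ^ 3)) :=
    Nat.mul_pos (by omega) (Nat.mul_pos (by omega) (by omega))
  have hkey : (q ^ 4 - 1) * ((q ^ 4 - q ^ 2) * (q ^ 6 - q ^ 4)) =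
      q * (q + 1) ^ 2 * (q ^ 2 + 1) * ((q ^ 2 - 1) * ((q ^ 3 - q ^ 2) * (q ^ 4 - q ^ 3))) := by
    zify [le_of_lt e1, le_of_lt e2, le_of_lt e3, le_of_lt e4, le_of_lt e5, le_of_lt e6]
    ring
  exact Nat.eq_of_mul_eq_mul_right hCpos (by rw [hYT, hkey])

theorem stmt12' (q : ℕ) (F : Type) [Field F] [Fintype F] (hq : Fintype.card F = q)
    (Sg Sg' : Submodule F (Fin 8 → F))
    (hSg : Module.finrank F Sg = 4) (hSg' : Module.finrank F Sg' = 4)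
    (hdisj : Sg ⊓ Sg' = ⊥)
    (ι : Type) (ℓ ℓ' : ι → Submodule F (Fin 8 → F))
    (hℓdim : ∀ i, Module.finrank F (ℓ i) = 2) (hℓle : ∀ i, ℓ i ≤ Sg)
    (hspread : ∀ v : Fin 8 → F, v ∈ Sg → v ≠ 0 → ∃! i, v ∈ ℓ i)
    (hℓ'dim : ∀ i, Module.finrank F (ℓ' i) = 2) (hℓ'le : ∀ i, ℓ' i ≤ Sg')
    (hspread' : ∀ v : Fin 8 → F, v ∈ Sg' → v ≠ 0 → ∃! i, v ∈ ℓ' i) :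
    (∀ r : Submodule F (Fin 8 → F), Module.finrank F r = 2 → r ⊓ Sg ≠ ⊥ →
      ∃ T : Submodule F (Fin 8 → F),
        (T = Sg ∨ (T ≠ Sg ∧ Module.finrank F T = 4 ∧
          ∃ i, T ≤ Sg ⊔ ℓ' i ∧ Module.finrank F ↥(T ⊓ Sg) = 3 ∧ ℓ i ≤ T ⊓ Sg)) ∧
        r ≤ T) := by
  intro r hr2 hrSg
  by_cases hrle : r ≤ Sg
  · exact ⟨Sg, Or.inl rfl, hrle⟩
  have hV8 : Module.finrank F (Fin 8 → F) = 8 := by simp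
  obtain ⟨v, hvr, hvSg⟩ := SetLike.not_le_iff_exists.mp hrle
  obtain ⟨p0, hp0, hp00⟩ := Submodule.exists_mem_ne_zero_of_ne_bot hrSg
  rw [Submodule.mem_inf] at hp0
  obtain ⟨hp0r, hp0Sg⟩ := hp0
  have htop : Sg ⊔ Sg' = ⊤ := by
    apply Submodule.eq_top_of_finrank_eq
    have h := Submodule.finrank_sup_add_finrank_inf_eq Sg Sg'
    rw [hdisj, finrank_bot, hSg, hSg'] at h
    rw [hV8]
    omega
  have hv' : v ∈ Sg ⊔ Sg' := htop ▸ Submodule.mem_top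
  obtain ⟨s, hs, s', hs', hvss⟩ := Submodule.mem_sup.mp hv'
  have hs'0 : s' ≠ 0 := by
    rintro rfl
    rw [add_zero] at hvss
    exact hvSg (hvss ▸ hs)
  obtain ⟨i, hi, -⟩ := hspread' s' hs' hs'0
  -- build a plane γ of Sg containing ℓ i and p0
  have hA3 : Module.finrank F ↥(ℓ i ⊔ span F {p0}) ≤ 3 := by
    have h := Submodule.finrank_sup_add_finrank_inf_eq (ℓ i) (span F {p0})
    rw [hℓdim, finrank_span_singleton hp00] at h
    omega
  have hASg : ℓ i ⊔ span F {p0} ≤ Sg :=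
    sup_le (hℓle i) ((span_singleton_le_iff_mem _ _).mpr hp0Sg)
  have hext : ∃ γ : Submodule F (Fin 8 → F),
      ℓ i ⊔ span F {p0} ≤ γ ∧ γ ≤ Sg ∧ Module.finrank F γ = 3 := by
    rcases eq_or_lt_of_le hA3 with h3 | hlt
    · exact ⟨_, le_rfl, hASg, h3⟩
    · have h2 : Module.finrank F ↥(ℓ i ⊔ span F {p0}) = 2 :=
        le_antisymm (by omega) (hℓdim i ▸ Submodule.finrank_mono le_sup_left)
      have hne : ℓ i ⊔ span F {p0} ≠ Sg := by
        intro h; rw [h, hSg] at h2; omega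
      obtain ⟨u, huSg, huA⟩ := SetLike.exists_of_lt (lt_of_le_of_ne hASg hne)
      refine ⟨(ℓ i ⊔ span F {p0}) ⊔ span F {u}, le_sup_left,
        sup_le hASg ((span_singleton_le_iff_mem _ _).mpr huSg), ?_⟩
      rw [aux_sup_span1 huA, h2]
  obtain ⟨γ, hAγ, hγSg, hγ3⟩ := hext
  have hvγ : v ∉ γ := fun h => hvSg (hγSg h)
  refine ⟨γ ⊔ span F {v}, Or.inr ⟨?_, ?_, i, ?_, ?_, ?_⟩, ?_⟩
  · intro h
    exact hvSg (h ▸ Submodule.mem_sup_right (mem_span_singleton_self v))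
  · rw [aux_sup_span1 hvγ, hγ3]
  · refine sup_le (hγSg.trans le_sup_left) ((span_singleton_le_iff_mem _ _).mpr ?_)
    rw [← hvss]
    exact add_mem (Submodule.mem_sup_left hs) (Submodule.mem_sup_right hi)
  · have hγle : γ ≤ (γ ⊔ span F {v}) ⊓ Sg := le_inf le_sup_left hγSg
    have hlt : (γ ⊔ span F {v}) ⊓ Sg < γ ⊔ span F {v} := by
      refine lt_of_le_of_ne inf_le_left (fun h => ?_)
      have : γ ⊔ span F {v} ≤ Sg := by rw [← h]; exact inf_le_right
      exact hvSg (this (Submodule.mem_sup_right (mem_span_singleton_self v)))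
    have h1 := Submodule.finrank_lt_finrank_of_lt hlt
    have h2 := Submodule.finrank_mono hγle
    rw [aux_sup_span1 hvγ, hγ3] at h1
    rw [hγ3] at h2
    omega
  · exact (le_sup_left.trans hAγ).trans (le_inf le_sup_left hγSg)
  · have hvp0 : v ∉ span F {p0} := fun h => hvSg ((span_singleton_le_iff_mem _ _).mpr hp0Sg h)
    have hsle : span F {p0} ⊔ span F {v} ≤ r :=
      sup_le ((span_singleton_le_iff_mem _ _).mpr hp0r) ((span_singleton_le_iff_mem _ _).mpr hvr)
    have hreq : span F {p0} ⊔ span F {v} = r := by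
      refine Submodule.eq_of_le_of_finrank_eq hsle ?_
      rw [aux_sup_span1 hvp0, finrank_span_singleton hp00, hr2]
    rw [← hreq]
    refine sup_le (((span_singleton_le_iff_mem _ _).mpr ?_).trans le_sup_left) le_sup_right
    exact hAγ (Submodule.mem_sup_right (mem_span_singleton_self p0))

/-- Given disjoint solids Sg, Sg' of PG(7,q) with matched line-spreads (ℓ i), (ℓ' i),
the set Y of solids T ≠ Sg with T ⊆ ⟨Sg, ℓ' i⟩ and T ∩ Sg a plane containing ℓ i
(for some i) has size q(q+1)²(q²+1), and every line meeting Sg lies in a solid of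
Y ∪ {Sg}. -/
theorem stmt12 (q : ℕ) (F : Type) [Field F] [Fintype F] (hq : Fintype.card F = q)
    (Sg Sg' : Submodule F (Fin 8 → F))
    (hSg : Module.finrank F Sg = 4) (hSg' : Module.finrank F Sg' = 4)
    (hdisj : Sg ⊓ Sg' = ⊥)
    (ι : Type) (ℓ ℓ' : ι → Submodule F (Fin 8 → F))
    (hℓdim : ∀ i, Module.finrank F (ℓ i) = 2) (hℓle : ∀ i, ℓ i ≤ Sg)
    (hspread : ∀ v : Fin 8 → F, v ∈ Sg → v ≠ 0 → ∃! i, v ∈ ℓ i)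
    (hℓ'dim : ∀ i, Module.finrank F (ℓ' i) = 2) (hℓ'le : ∀ i, ℓ' i ≤ Sg')
    (hspread' : ∀ v : Fin 8 → F, v ∈ Sg' → v ≠ 0 → ∃! i, v ∈ ℓ' i) :
    Nat.card {T : Submodule F (Fin 8 → F) //
        T ≠ Sg ∧ Module.finrank F T = 4 ∧
        ∃ i, T ≤ Sg ⊔ ℓ' i ∧ Module.finrank F ↥(T ⊓ Sg) = 3 ∧ ℓ i ≤ T ⊓ Sg} =
      q * (q + 1) ^ 2 * (q ^ 2 + 1) ∧
    (∀ r : Submodule F (Fin 8 → F), Module.finrank F r = 2 → r ⊓ Sg ≠ ⊥ →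
      ∃ T : Submodule F (Fin 8 → F),
        (T = Sg ∨ (T ≠ Sg ∧ Module.finrank F T = 4 ∧
          ∃ i, T ≤ Sg ⊔ ℓ' i ∧ Module.finrank F ↥(T ⊓ Sg) = 3 ∧ ℓ i ≤ T ⊓ Sg)) ∧
        r ≤ T) := by
  exact ⟨stmt12c q F hq Sg Sg' hSg hSg' hdisj ι ℓ ℓ' hℓdim hℓle hspread hℓ'dim hℓ'le hspread',
    stmt12' q F hq Sg Sg' hSg hSg' hdisj ι ℓ ℓ' hℓdim hℓle hspread hℓ'dim hℓ'le hspread'⟩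
end

section
/- Let Γ be a 5-space of PG(7,q) containing a solid Σ, let S be a line-spread of Σ, and for each line ℓ ∈ S let Y_ℓ be the set of solids of Γ meeting Σ exactly in ℓ. Then |Y_ℓ| = q^4 for each ℓ, and every plane π of Γ with π ∩ Σ a single point is contained in exactly one solid of ⋃_{ℓ∈S} Y_ℓ. -/
open Module Submodule

section Aux

variable {F : Type} [Field F] {V : Type} [AddCommGroup V] [Module F V] [FiniteDimensional F V]

lemma aux_finrank_map_mkQ (L T : Submodule F V) (h : L ≤ T) :
    finrank F T = finrank F (T.map L.mkQ) + finrank F L := by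
  have h1 := LinearMap.finrank_range_add_finrank_ker (L.mkQ.domRestrict T)
  rw [LinearMap.range_domRestrict] at h1
  have h2 : LinearMap.ker (L.mkQ.domRestrict T) = comap T.subtype L := by
    ext x
    simp [LinearMap.mem_ker, Submodule.mem_comap, Submodule.Quotient.mk_eq_zero]
  rw [h2, (comapSubtypeEquivOfLe h).finrank_eq] at h1
  exact h1.symm

lemma aux_card_compl [Fintype F] (p : Submodule F V) :
    Nat.card {q : Submodule F V // IsCompl p q}
      = Fintype.card F ^ (finrank F (V ⧸ p) * finrank F p) := by
  obtain ⟨q0, hq0⟩ := p.exists_isCompl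
  set f0 : {f : V →ₗ[F] p // ∀ x : p, f x = x} := p.isComplEquivProj ⟨q0, hq0⟩ with hf0
  have key : ∀ (g : {f : V →ₗ[F] p // ∀ x : p, f x = x}) (x : V) (hx : x ∈ p),
      g.1 x = ⟨x, hx⟩ := fun g x hx => g.2 ⟨x, hx⟩
  have e2 : {f : V →ₗ[F] p // ∀ x : p, f x = x} ≃ ((V ⧸ p) →ₗ[F] p) :=
  { toFun := fun f => p.liftQ (f.1 - f0.1) (by
      intro x hx
      simp [LinearMap.mem_ker, key f x hx, key f0 x hx])
    invFun := fun g => ⟨f0.1 + (g.comp p.mkQ), by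
      intro x
      have hz : p.mkQ (x : V) = 0 := by
        simp [Submodule.mkQ_apply, Submodule.Quotient.mk_eq_zero, x.2]
      simp [key f0 x.1 x.2, hz]⟩
    left_inv := fun f => by
      apply Subtype.ext
      ext x
      simp [Submodule.liftQ_apply]
    right_inv := fun g => by
      apply Submodule.linearMap_qext
      ext x
      simp [Submodule.liftQ_apply] }
  rw [Nat.card_congr ((p.isComplEquivProj).trans e2)]
  have : Finite ((V ⧸ p) →ₗ[F] p) := Module.finite_of_finite F
  have : Fintype ((V ⧸ p) →ₗ[F] p) := Fintype.ofFinite _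
  rw [Nat.card_eq_fintype_card, card_eq_pow_finrank (K := F), Module.finrank_linearMap]

end Aux

/-- In a 5-space Γ containing a solid Sg with line-spread (ℓ i), the set Y_{ℓ i} of
solids of Γ meeting Sg exactly in ℓ i has size q⁴, and every plane meeting Sg in a
single point lies in exactly one solid of ⋃ᵢ Y_{ℓ i}. -/
theorem stmt15 (q : ℕ) (F : Type) [Field F] [Fintype F] (hq : Fintype.card F = q)
    (Sg : Submodule F (Fin 6 → F)) (hSg : Module.finrank F Sg = 4)
    (ι : Type) (ℓ : ι → Submodule F (Fin 6 → F))
    (hℓdim : ∀ i, Module.finrank F (ℓ i) = 2) (hℓle : ∀ i, ℓ i ≤ Sg)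
    (hspread : ∀ v : Fin 6 → F, v ∈ Sg → v ≠ 0 → ∃! i, v ∈ ℓ i) :
    (∀ i, Nat.card {T : Submodule F (Fin 6 → F) //
        Module.finrank F T = 4 ∧ T ⊓ Sg = ℓ i} = q ^ 4) ∧
    (∀ π : Submodule F (Fin 6 → F), Module.finrank F π = 3 →
      Module.finrank F ↥(π ⊓ Sg) = 1 →
      ∃! T : Submodule F (Fin 6 → F),
        (∃ i, Module.finrank F T = 4 ∧ T ⊓ Sg = ℓ i) ∧ π ≤ T) := by
  have hV : finrank F (Fin 6 → F) = 6 := Module.finrank_fin_fun F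
  constructor
  · -- Part 1
    intro i
    set L := ℓ i with hL
    have hLdim : finrank F L = 2 := hℓdim i
    have hLS : L ≤ Sg := hℓle i
    set W : Submodule F ((Fin 6 → F) ⧸ L) := Sg.map L.mkQ with hW
    have hE : finrank F ((Fin 6 → F) ⧸ L) = 4 := by
      have := L.finrank_quotient_add_finrank
      omega
    have hWdim : finrank F W = 2 := by
      have h1 := aux_finrank_map_mkQ L Sg hLS
      rw [← hW] at h1
      omega
    -- the equivalence with complements of W
    have e : {T : Submodule F (Fin 6 → F) // finrank F T = 4 ∧ T ⊓ Sg = L} ≃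
        {U : Submodule F ((Fin 6 → F) ⧸ L) // IsCompl W U} :=
    { toFun := fun T => ⟨T.1.map L.mkQ, by
        obtain ⟨T, hT4, hTS⟩ := T
        have hLT : L ≤ T := hTS ▸ inf_le_left
        have hUdim : finrank F (T.map L.mkQ) = 2 := by
          have := aux_finrank_map_mkQ L T hLT
          omega
        have hsuptop : Sg ⊔ T = ⊤ := by
          apply Submodule.eq_top_of_finrank_eq
          have h1 := Submodule.finrank_sup_add_finrank_inf_eq Sg T
          rw [inf_comm, hTS] at h1
          omega
        have hsup : W ⊔ T.map L.mkQ = ⊤ := by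
          rw [hW, ← Submodule.map_sup, hsuptop, Submodule.map_top, Submodule.range_mkQ]
        have hinf : W ⊓ T.map L.mkQ = ⊥ := by
          rw [← Submodule.finrank_eq_zero (R := F)]
          have h1 := Submodule.finrank_sup_add_finrank_inf_eq W (T.map L.mkQ)
          rw [hsup] at h1
          rw [finrank_top] at h1
          omega
        exact ⟨disjoint_iff.mpr hinf, codisjoint_iff.mpr hsup⟩⟩
      invFun := fun U => ⟨comap L.mkQ U.1, by
        obtain ⟨U, hU⟩ := U
        have hSg' : comap L.mkQ W = Sg := by
          rw [hW, Submodule.comap_map_eq, Submodule.ker_mkQ, sup_eq_left.mpr hLS]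
        have hTS : comap L.mkQ U ⊓ Sg = L := by
          rw [← hSg', ← Submodule.comap_inf, inf_comm, disjoint_iff.mp hU.disjoint,
            Submodule.comap_bot, Submodule.ker_mkQ]
        have hUdim : finrank F U = 2 := by
          have h1 := Submodule.finrank_sup_add_finrank_inf_eq W U
          rw [codisjoint_iff.mp hU.codisjoint, disjoint_iff.mp hU.disjoint] at h1
          rw [finrank_top, finrank_bot] at h1
          omega
        refine ⟨?_, hTS⟩
        show finrank F ↥(comap L.mkQ U) = 4
        have hLT : L ≤ comap L.mkQ U := hTS.symm.trans_le inf_le_left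
        have h2 := aux_finrank_map_mkQ L (comap L.mkQ U) hLT
        rw [Submodule.map_comap_eq_of_surjective (Submodule.mkQ_surjective L)] at h2
        omega⟩
      left_inv := fun T => by
        apply Subtype.ext
        obtain ⟨T, hT4, hTS⟩ := T
        have hLT : L ≤ T := hTS ▸ inf_le_left
        simp only [Submodule.comap_map_eq, Submodule.ker_mkQ]
        exact sup_eq_left.mpr hLT
      right_inv := fun U => by
        apply Subtype.ext
        exact Submodule.map_comap_eq_of_surjective (Submodule.mkQ_surjective L) U.1 }
    rw [Nat.card_congr e, aux_card_compl, hq]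
    have hQW : finrank F (((Fin 6 → F) ⧸ L) ⧸ W) = 2 := by
      have := W.finrank_quotient_add_finrank
      omega
    rw [hQW, hWdim]
  · -- Part 2
    intro π hπ3 hπSg1
    have hne : π ⊓ Sg ≠ ⊥ := by
      intro h
      rw [h, finrank_bot] at hπSg1
      omega
    obtain ⟨v, hv, hv0⟩ := Submodule.exists_mem_ne_zero_of_ne_bot hne
    have hvπ : v ∈ π := hv.1
    have hvSg : v ∈ Sg := hv.2
    obtain ⟨i, hvi, hiu⟩ := hspread v hvSg hv0
    have hspan : (F ∙ v) = π ⊓ Sg := by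
      apply Submodule.eq_of_le_of_finrank_eq
      · exact (Submodule.span_singleton_le_iff_mem v _).mpr hv
      · rw [finrank_span_singleton hv0, hπSg1]
    have hsub : π ⊓ Sg ≤ ℓ i := hspan ▸ (Submodule.span_singleton_le_iff_mem v _).mpr hvi
    set T := π ⊔ ℓ i with hT
    have hπℓ : π ⊓ ℓ i = π ⊓ Sg := le_antisymm
      (inf_le_inf_left π (hℓle i)) (le_inf inf_le_left hsub)
    have hT4 : finrank F T = 4 := by
      have h1 := Submodule.finrank_sup_add_finrank_inf_eq π (ℓ i)
      rw [hπℓ, ← hT] at h1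
      have := hℓdim i
      omega
    have hπSgtop : π ⊔ Sg = ⊤ := by
      apply Submodule.eq_top_of_finrank_eq
      have h1 := Submodule.finrank_sup_add_finrank_inf_eq π Sg
      omega
    have hTSgtop : T ⊔ Sg = ⊤ := by
      rw [eq_top_iff, ← hπSgtop]
      exact sup_le_sup_right (le_sup_left : π ≤ T) Sg
    have hTSg : T ⊓ Sg = ℓ i := by
      symm
      apply Submodule.eq_of_le_of_finrank_eq (le_inf (le_sup_right : ℓ i ≤ T) (hℓle i))
      have h1 := Submodule.finrank_sup_add_finrank_inf_eq T Sg
      rw [hTSgtop] at h1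
      rw [finrank_top] at h1
      have := hℓdim i
      show finrank F ↥(ℓ i) = finrank F ↥(T ⊓ Sg)
      omega
    refine ⟨T, ⟨⟨i, hT4, hTSg⟩, le_sup_left⟩, ?_⟩
    rintro T' ⟨⟨j, hT'4, hT'Sg⟩, hπT'⟩
    have hvT' : v ∈ T' ⊓ Sg := ⟨hπT' hvπ, hvSg⟩
    rw [hT'Sg] at hvT'
    have hji : j = i := hiu j hvT'
    have hℓT' : ℓ i ≤ T' := by
      rw [← hji, ← hT'Sg]
      exact inf_le_left
    have hle : T ≤ T' := sup_le hπT' hℓT'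
    exact (Submodule.eq_of_le_of_finrank_eq hle (by omega)).symm
end
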